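/- Let u : ℝⁿ → ℝᵐ be a C² solution of the system Δu = ∇W(u), where W : ℝᵐ → ℝ is C¹. Define the stress-energy tensor T_{ij} = ∂u/∂x_i · ∂u/∂x_j − δ_{ij}((1/2)|∇u|² + W(u)). Then T is divergence-free: for each j, Σᵢ ∂T_{ij}/∂x_i = 0. -/

import Mathlib

open Filter Topology
open scoped RealInnerProductSpace

noncomputable def stressEnergy {n m : ℕ}
    (u : EuclideanSpace ℝ (Fin n) → EuclideanSpace ℝ (Fin m)) (W : EuclideanSpace ℝ (Fin m) → ℝ)
    (i j : Fin n) (x : EuclideanSpace ℝ (Fin n)) : ℝ :=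
  ⟪fderiv ℝ u x (EuclideanSpace.single i 1), fderiv ℝ u x (EuclideanSpace.single j 1)⟫ -
    (if i = j then (1 : ℝ) else 0) *
      ((1 / 2) * ∑ k, ‖fderiv ℝ u x (EuclideanSpace.single k 1)‖ ^ 2 + W (u x))

/-! Differentiating `T i j` along `e i` and summing over `i`, the terms `⟪∂ᵢu, ∂ᵢ∂ⱼu⟫` cancel
against the `j`-th derivative of `½|∇u|²` by symmetry of the Hessian, leaving
`⟪Δu - ∇W(u), ∂ⱼu⟫`, which vanishes on solutions. -/

section

variable {𝕜 E F : Type*} [NontriviallyNormedField 𝕜] [NormedAddCommGroup E] [NormedSpace 𝕜 E]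
  [NormedAddCommGroup F] [NormedSpace 𝕜 F] {u : E → F} {x : E}

theorem differentiableAt_fderiv_apply (hu : DifferentiableAt 𝕜 (fderiv 𝕜 u) x) (a : E) :
    DifferentiableAt 𝕜 (fun y => fderiv 𝕜 u y a) x :=
  hu.clm_apply (differentiableAt_const a)

theorem fderiv_fun_fderiv_apply (hu : DifferentiableAt 𝕜 (fderiv 𝕜 u) x) (a v : E) :
    fderiv 𝕜 (fun y => fderiv 𝕜 u y a) x v = fderiv 𝕜 (fderiv 𝕜 u) x v a := by
  rw [fderiv_clm_apply hu (differentiableAt_const a)]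
  simp

end

section

variable {E F : Type*} [NormedAddCommGroup E] [NormedSpace ℝ E]
  [NormedAddCommGroup F] [InnerProductSpace ℝ F] {u : E → F} {x : E}

theorem fderiv_inner_fderiv_apply (hu : DifferentiableAt ℝ (fderiv ℝ u) x) (a b v : E) :
    fderiv ℝ (fun y => ⟪fderiv ℝ u y a, fderiv ℝ u y b⟫) x v =
      ⟪fderiv ℝ (fderiv ℝ u) x v a, fderiv ℝ u x b⟫ +
        ⟪fderiv ℝ u x a, fderiv ℝ (fderiv ℝ u) x v b⟫ := by
  rw [fderiv_inner_apply (𝕜 := ℝ) (f := fun y => fderiv ℝ u y a) (g := fun y => fderiv ℝ u y b)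
      (differentiableAt_fderiv_apply hu a) (differentiableAt_fderiv_apply hu b),
    fderiv_fun_fderiv_apply hu, fderiv_fun_fderiv_apply hu, add_comm]

noncomputable def energyDensity {ι : Type*} [Fintype ι] (u : E → F) (W : F → ℝ) (e : ι → E)
    (y : E) : ℝ :=
  (1 / 2) * ∑ k, ‖fderiv ℝ u y (e k)‖ ^ 2 + W (u y)

theorem differentiableAt_energyDensity {ι : Type*} [Fintype ι] {W : F → ℝ} (e : ι → E)
    (hu : DifferentiableAt ℝ u x) (hu' : DifferentiableAt ℝ (fderiv ℝ u) x)
    (hW : DifferentiableAt ℝ W (u x)) :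
    DifferentiableAt ℝ (energyDensity u W e) x := by
  have hsq k := (differentiableAt_fderiv_apply hu' (e k)).norm_sq ℝ
  exact ((DifferentiableAt.fun_sum fun k _ => hsq k).const_mul _).add (hW.comp x hu)

theorem fderiv_energyDensity_apply [CompleteSpace F] {ι : Type*} [Fintype ι] {W : F → ℝ}
    (e : ι → E) (hu : DifferentiableAt ℝ u x) (hu' : DifferentiableAt ℝ (fderiv ℝ u) x)
    (hW : DifferentiableAt ℝ W (u x)) (v : E) :
    fderiv ℝ (energyDensity u W e) x v =
      ∑ k, ⟪fderiv ℝ u x (e k), fderiv ℝ (fderiv ℝ u) x v (e k)⟫ +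
        ⟪gradient W (u x), fderiv ℝ u x v⟫ := by
  have hpartial := differentiableAt_fderiv_apply hu'
  have hsq : ∀ k, DifferentiableAt ℝ (fun y => ⟪fderiv ℝ u y (e k), fderiv ℝ u y (e k)⟫) x :=
    fun k => (hpartial (e k)).inner ℝ (hpartial (e k))
  unfold energyDensity
  simp only [← real_inner_self_eq_norm_sq]
  have hsum := DifferentiableAt.fun_sum fun k (_ : k ∈ Finset.univ) => hsq k
  rw [fderiv_fun_add (g := fun y => W (u y)) (hsum.const_mul _) (hW.comp x hu),
    fderiv_const_mul hsum, fderiv_fun_sum fun k _ => hsq k, fderiv_fun_comp x hW hu]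
  simp only [add_apply, smul_apply, sum_apply, ContinuousLinearMap.comp_apply,
    fderiv_inner_fderiv_apply hu', inner_gradient_left, smul_eq_mul]
  congr 1
  rw [Finset.mul_sum]
  refine Finset.sum_congr rfl fun k _ => ?_
  rw [real_inner_comm]
  ring

end

section

variable {n m : ℕ} {u : EuclideanSpace ℝ (Fin n) → EuclideanSpace ℝ (Fin m)}
  {W : EuclideanSpace ℝ (Fin m) → ℝ} {x : EuclideanSpace ℝ (Fin n)}

local notation "e" => fun (i : Fin n) => EuclideanSpace.single i (1 : ℝ)

theorem stressEnergy_eq (i j : Fin n) :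
    stressEnergy u W i j = fun y => ⟪fderiv ℝ u y (e i), fderiv ℝ u y (e j)⟫ -
      (if i = j then (1 : ℝ) else 0) * energyDensity u W e y :=
  rfl

theorem fderiv_stressEnergy_apply (hu : DifferentiableAt ℝ u x)
    (hu' : DifferentiableAt ℝ (fderiv ℝ u) x) (hW : DifferentiableAt ℝ W (u x))
    (i j : Fin n) (v : EuclideanSpace ℝ (Fin n)) :
    fderiv ℝ (stressEnergy u W i j) x v =
      ⟪fderiv ℝ (fderiv ℝ u) x v (e i), fderiv ℝ u x (e j)⟫ +
        ⟪fderiv ℝ u x (e i), fderiv ℝ (fderiv ℝ u) x v (e j)⟫ -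
      (if i = j then (1 : ℝ) else 0) * fderiv ℝ (energyDensity u W e) x v := by
  have hpartial := differentiableAt_fderiv_apply hu'
  have henergy := differentiableAt_energyDensity e hu hu' hW
  rw [stressEnergy_eq,
    fderiv_fun_sub ((hpartial (e i)).inner ℝ (hpartial (e j))) (henergy.const_mul _),
    fderiv_const_mul henergy, sub_apply, smul_apply, smul_eq_mul, fderiv_inner_fderiv_apply hu']

theorem sum_fderiv_stressEnergy_apply (hu : ContDiffAt ℝ 2 u x)
    (hW : DifferentiableAt ℝ W (u x)) (j : Fin n) :
    ∑ i, fderiv ℝ (stressEnergy u W i j) x (e i) =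
      ⟪(∑ i, fderiv ℝ (fun y => fderiv ℝ u y (e i)) x (e i)) - gradient W (u x),
        fderiv ℝ u x (e j)⟫ := by
  have hu₁ : DifferentiableAt ℝ u x := hu.differentiableAt (by norm_num)
  have hu₂ : DifferentiableAt ℝ (fderiv ℝ u) x :=
    (hu.fderiv_right (m := 1) (by norm_num)).differentiableAt one_ne_zero
  have hsymm : IsSymmSndFDerivAt ℝ u x := hu.isSymmSndFDerivAt (by simp)
  simp only [fderiv_stressEnergy_apply hu₁ hu₂ hW, Finset.sum_sub_distrib, Finset.sum_add_distrib,
    ite_mul, one_mul, zero_mul, Finset.sum_ite_eq', Finset.mem_univ, if_true,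
    fderiv_energyDensity_apply _ hu₁ hu₂ hW, fderiv_fun_fderiv_apply hu₂, inner_sub_left, sum_inner]
  simp only [hsymm (e _) (e j)]
  ring

end

theorem stmt1 {n m : ℕ}
    (u : EuclideanSpace ℝ (Fin n) → EuclideanSpace ℝ (Fin m)) (W : EuclideanSpace ℝ (Fin m) → ℝ)
    (hu : ContDiff ℝ 2 u) (hW : ContDiff ℝ 1 W)
    (hsol : ∀ x, (∑ i, fderiv ℝ (fun y => fderiv ℝ u y (EuclideanSpace.single i 1)) x
        (EuclideanSpace.single i 1)) = gradient W (u x)) :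
    ∀ (j : Fin n) (x : EuclideanSpace ℝ (Fin n)),
      (∑ i, fderiv ℝ (stressEnergy u W i j) x (EuclideanSpace.single i 1)) = 0 := by
  intro j x
  rw [sum_fderiv_stressEnergy_apply hu.contDiffAt (hW.differentiable one_ne_zero _) j, hsol x,
    sub_self, inner_zero_left]
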